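/- arXiv:2507.12352 — 7 statements merged into one kernel-verified Lean document; each statement's English description precedes it below -/
import Mathlib

section
/- Let n ≥ 0. In the formal power series ring ℚ[[q]], the series Y_n(q) satisfies Y_n(q) = (1/(2^n (n+1))) · Σ_{k=0}^{⌊n/2⌋} C(n+1, 2k+1) · θ(q)^{2n−4k} · U_{2k}(q), where C(a,b) denotes the binomial coefficient. -/
/-! Only even powers of `X` occur in `OmegaX`, so the coefficient of `X^n` in the product is
`Σ_k [X^(n-2k)] exp(θ² X/2) · [X^(2k)] OmegaX`, and the scalars combine through
`n! / ((n-2k)! (2k+1)!) = C(n+1, 2k+1) / (n+1)` and `2^(n-2k) 4^k = 2^n`. -/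

open PowerSeries Finset
open scoped Classical

/-- A series supported on triangular numbers: the coefficient of `q^(k(k+1)/2)` is `c k`. -/
noncomputable def trigSeries (c : ℕ → ℚ) : PowerSeries ℚ :=
  PowerSeries.mk fun m => if h : ∃ k, k * (k + 1) / 2 = m then c (Nat.find h) else 0

/-- Jacobi's series `J(q) = Σ_{k≥0} (−1)^k (2k+1) q^{k(k+1)/2}`. -/
noncomputable def Jseries : PowerSeries ℚ :=
  trigSeries fun k => (-1) ^ k * (2 * k + 1)

/-- Ramanujan's `U_{2n}(q)`. -/
noncomputable def Useries (n : ℕ) : PowerSeries ℚ :=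
  trigSeries (fun k => (-1) ^ k * (2 * k + 1 : ℚ) ^ (2 * n + 1)) * Jseries⁻¹

/-- `θ(q) = 1 + 2 Σ_{n≥1} q^{n²}`. -/
noncomputable def thetaSeries : PowerSeries ℚ :=
  PowerSeries.mk fun m => if m = 0 then 1 else if IsSquare m then 2 else 0

/-- `exp(θ(q)² X / 2)` as a power series in `X` over `ℚ[[q]]`. -/
noncomputable def expThetaX : PowerSeries (PowerSeries ℚ) :=
  PowerSeries.mk fun m =>
    PowerSeries.C (R := ℚ) (1 / (2 ^ m * m.factorial)) * thetaSeries ^ (2 * m)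

/-- `Σ_{t≥0} U_{2t}(q) X^{2t} / (4^t (2t+1)!)` as a power series in `X` over `ℚ[[q]]`. -/
noncomputable def OmegaX : PowerSeries (PowerSeries ℚ) :=
  PowerSeries.mk fun m =>
    if Even m then
      PowerSeries.C (R := ℚ) (1 / (4 ^ (m / 2) * (m + 1).factorial)) * Useries (m / 2)
    else 0

/-- `Y_n(q)` is `n!` times the coefficient of `X^n` in `exp(θ² X/2)·Ω(X/2)`. -/
noncomputable def Yseries (n : ℕ) : PowerSeries ℚ :=
  (n.factorial : ℚ) • (PowerSeries.coeff (R := PowerSeries ℚ) n (expThetaX * OmegaX))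

theorem PowerSeries.coeff_mul_of_odd_coeff_eq_zero {R : Type*} [Semiring R]
    {f g : PowerSeries R} (hg : ∀ m, Odd m → coeff m g = 0) (n : ℕ) :
    coeff n (f * g) = ∑ k ∈ range (n / 2 + 1), coeff (n - 2 * k) f * coeff (2 * k) g := by
  have hinj : Set.InjOn (2 * ·) (range (n / 2 + 1)) := fun x _ y _ h => by simpa using h
  rw [coeff_mul, ← Nat.sum_antidiagonal_swap]
  simp only [Prod.fst_swap, Prod.snd_swap]
  rw [Nat.sum_antidiagonal_eq_sum_range_succ fun i j => coeff j f * coeff i g,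
    ← sum_image (f := fun j => coeff (n - j) f * coeff j g) hinj]
  refine (sum_subset (fun j hj => ?_) fun j _ hj => ?_).symm
  · obtain ⟨k, hk, rfl⟩ := mem_image.1 hj
    simp only [mem_range] at hk ⊢
    omega
  · have hodd : Odd j := by
      refine Nat.not_even_iff_odd.1 fun ⟨k, hk⟩ => hj (mem_image.2 ⟨k, ?_, by omega⟩)
      simp only [mem_range] at *
      omega
    simp [hg j hodd]

theorem coeff_OmegaX_of_odd {m : ℕ} (hm : Odd m) : coeff m OmegaX = 0 := by
  simp [OmegaX, Nat.not_even_iff_odd.2 hm]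

theorem coeff_OmegaX_two_mul (k : ℕ) :
    coeff (2 * k) OmegaX = C (1 / (4 ^ k * (2 * k + 1).factorial) : ℚ) * Useries k := by
  simp [OmegaX]

open Nat in
theorem factorial_mul_one_div_mul_one_div_eq_choose {m n : ℕ} (h : 2 * m ≤ n) :
    (n ! : ℚ) * (1 / (2 ^ (n - 2 * m) * (n - 2 * m)!)) * (1 / (4 ^ m * (2 * m + 1)!)) =
      1 / (2 ^ n * (n + 1)) * (n + 1).choose (2 * m + 1) := by
  have hpow : (2 : ℚ) ^ (n - 2 * m) * 4 ^ m = 2 ^ n := by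
    rw [show (4 : ℚ) = 2 ^ 2 by norm_num, ← pow_mul, ← pow_add, Nat.sub_add_cancel h]
  have hchoose := Nat.choose_mul_factorial_mul_factorial (show 2 * m + 1 ≤ n + 1 by omega)
  rw [Nat.succ_sub_succ, Nat.factorial_succ n] at hchoose
  rw [← hpow]
  field_simp
  norm_cast
  linarith

theorem stmt0 (n : ℕ) :
    Yseries n =
      PowerSeries.C (R := ℚ) (1 / (2 ^ n * (n + 1))) *
        ∑ k ∈ Finset.range (n / 2 + 1),
          ((n + 1).choose (2 * k + 1) : PowerSeries ℚ) * thetaSeries ^ (2 * n - 4 * k) *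
            Useries k := by
  rw [Yseries, coeff_mul_of_odd_coeff_eq_zero (fun _ => coeff_OmegaX_of_odd), smul_sum, mul_sum]
  refine sum_congr rfl fun k hk => ?_
  have h2k : 2 * k ≤ n := by
    rw [mem_range] at hk
    omega
  have hcoeff := congrArg (C (R := ℚ)) (factorial_mul_one_div_mul_one_div_eq_choose h2k)
  simp only [map_mul, map_natCast] at hcoeff
  rw [expThetaX, coeff_mk, coeff_OmegaX_two_mul, smul_eq_C_mul, map_natCast,
    show 2 * n - 4 * k = 2 * (n - 2 * k) by omega]
  linear_combination (thetaSeries ^ (2 * (n - 2 * k)) * Useries k) * hcoeff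
end

section
/- For every n ≥ 0, the constant term (coefficient of q^0) of the formal power series Y_n(q) ∈ ℚ[[q]] equals 1/(n+1). -/
open PowerSeries Finset
open scoped Classical

/-! At `q = 0` both `θ` and every `U_{2t}` become `1`, so the series in `X` specialises to
`e^{X/2} · sinh(X/2)/(X/2) = (e^X - 1)/X`, whose coefficient of `X^n` is `1/(n+1)!`. -/

theorem rescale_exp_mul_sub_rescale_exp_neg {A : Type*} [CommRing A] [Algebra ℚ A] (a : A) :
    rescale a (exp A) * (rescale a (exp A) - rescale (-a) (exp A)) =
      rescale (2 * a) (exp A) - 1 := by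
  rw [mul_sub, exp_mul_exp_eq_exp_add, exp_mul_exp_eq_exp_add, add_neg_cancel, two_mul]
  simp

theorem constantCoeff_trigSeries (c : ℕ → ℚ) : constantCoeff (trigSeries c) = c 0 := by
  have h : ∃ k, k * (k + 1) / 2 = 0 := ⟨0, rfl⟩
  rw [trigSeries, ← coeff_zero_eq_constantCoeff, coeff_mk, dif_pos h,
    (Nat.find_eq_zero h).mpr rfl]

theorem constantCoeff_Useries (n : ℕ) : constantCoeff (Useries n) = 1 := by
  simp [Useries, Jseries, constantCoeff_trigSeries]

theorem constantCoeff_thetaSeries : constantCoeff thetaSeries = 1 := by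
  rw [thetaSeries, ← coeff_zero_eq_constantCoeff, coeff_mk, if_pos rfl]

theorem map_constantCoeff_expThetaX :
    map constantCoeff expThetaX = rescale (1 / 2 : ℚ) (exp ℚ) := by
  ext m
  simp [expThetaX, coeff_exp, constantCoeff_thetaSeries, mul_comm]

theorem X_mul_map_constantCoeff_OmegaX :
    X * map constantCoeff OmegaX =
      rescale (1 / 2 : ℚ) (exp ℚ) - rescale (-(1 / 2) : ℚ) (exp ℚ) := by
  ext (_ | m)
  · rw [coeff_zero_X_mul, map_sub, coeff_rescale, coeff_rescale]
    simp
  rw [coeff_succ_X_mul, coeff_map, OmegaX, coeff_mk]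
  simp only [map_sub, coeff_rescale, coeff_exp, Algebra.algebraMap_self, RingHom.id_apply]
  rcases Nat.even_or_odd m with hm | hm
  · obtain ⟨t, rfl⟩ := hm.two_dvd
    rw [if_pos hm, Nat.mul_div_cancel_left t two_pos, map_mul, constantCoeff_C,
      constantCoeff_Useries, (odd_two_mul_add_one t).neg_pow, pow_succ, pow_mul]
    simp only [one_div, inv_pow, mul_inv]
    field_simp
    ring
  · rw [if_neg (Nat.not_even_iff_odd.mpr hm), map_zero, hm.add_one.neg_pow]
    ring

theorem stmt1 (n : ℕ) :
    PowerSeries.constantCoeff (R := ℚ) (Yseries n) = 1 / (n + 1) := by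
  have hq_zero : X * map constantCoeff (expThetaX * OmegaX) = exp ℚ - 1 := by
    rw [map_mul, mul_left_comm, X_mul_map_constantCoeff_OmegaX, map_constantCoeff_expThetaX,
      rescale_exp_mul_sub_rescale_exp_neg]
    norm_num
  calc constantCoeff (Yseries n)
      = n.factorial * coeff (n + 1) (X * map constantCoeff (expThetaX * OmegaX)) := by
        rw [coeff_succ_X_mul, coeff_map, Yseries, smul_eq_C_mul, map_mul, constantCoeff_C]
    _ = 1 / (n + 1) := by
        rw [hq_zero, map_sub, coeff_exp, coeff_one, if_neg n.succ_ne_zero, sub_zero,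
          Nat.factorial_succ]
        push_cast
        field_simp
end

section
/- For every n ≥ 1, every k ≥ 1 and every x = (x_1,…,x_k) ∈ ℚ^k, one has T_{2n+1}(x) = Σ_{j=0}^n (−1)^j A_{2j+1} C(2n+1, 2j+1) T_1(x)^{2j+1} T_{2n−2j}(x), where C(a,b) denotes the binomial coefficient. -/
open Finset

/-- The `m`-th power sum `p_m(x) = Σ_i x_i^m`. -/
def psum {k : ℕ} (m : ℕ) (x : Fin k → ℚ) : ℚ := ∑ i, x i ^ m

/-- The weight function `φ_U` on partitions of `t`. -/
noncomputable def phiU (t : ℕ) (μ : Nat.Partition t) : ℚ :=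
  ((2 * t + 1).factorial : ℚ) * 4 ^ t *
    ∏ j ∈ Finset.Icc 1 t,
      (1 / ((μ.parts.count j).factorial : ℚ)) *
        (bernoulli (2 * j) / ((2 * j) * (2 * j).factorial)) ^ (μ.parts.count j)

/-- `u_{2t}(x) = Σ_{λ⊢t} φ_U(λ) Π_j p_{2j}(x)^{m_j}`. -/
noncomputable def u2 {k : ℕ} (t : ℕ) (x : Fin k → ℚ) : ℚ :=
  ∑ μ : Nat.Partition t,
    phiU t μ * ∏ j ∈ Finset.Icc 1 t, (psum (2 * j) x) ^ (μ.parts.count j)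

/-- `ũ_{2t}(x) = Σ_{λ⊢t} φ_U(λ) Π_j (−p_{2j}(x))^{m_j}`. -/
noncomputable def ut2 {k : ℕ} (t : ℕ) (x : Fin k → ℚ) : ℚ :=
  ∑ μ : Nat.Partition t,
    phiU t μ * ∏ j ∈ Finset.Icc 1 t, (-(psum (2 * j) x)) ^ (μ.parts.count j)

/-- `P_n(x) = Σ_{∅≠S⊆{1,…,k}} (−1)^{|S|−1} (Σ_{i∈S} x_i)^n`. -/
def Pn {k : ℕ} (n : ℕ) (x : Fin k → ℚ) : ℚ :=
  ∑ S ∈ (Finset.univ : Finset (Fin k)).powerset.erase ∅,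
    (-1 : ℚ) ^ (S.card - 1) * (∑ i ∈ S, x i) ^ n

/-- `T_n(x) = Σ_{|a|=n} (n!/Π a_i!) Π_i x_i^{a_i}/(a_i+1)`. -/
def Tpoly {k : ℕ} (n : ℕ) (x : Fin k → ℚ) : ℚ :=
  ∑ a ∈ Finset.Nat.antidiagonalTuple k n,
    ((n.factorial : ℚ) / ∏ i, ((a i).factorial : ℚ)) * ∏ i, x i ^ (a i) / (a i + 1)

/-- `f_n(x) = Σ_{|a|=n} (n!/Π a_i!) Π_i (−1)^{a_i} B_{a_i} x_i^{a_i}`. -/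
noncomputable def fpoly {k : ℕ} (n : ℕ) (x : Fin k → ℚ) : ℚ :=
  ∑ a ∈ Finset.Nat.antidiagonalTuple k n,
    ((n.factorial : ℚ) / ∏ i, ((a i).factorial : ℚ)) *
      ∏ i, (-1) ^ (a i) * bernoulli (a i) * x i ^ (a i)

/-- The tangent (zig-zag) numbers `A_{2j+1}`. -/
noncomputable def tangentA (j : ℕ) : ℚ :=
  (-1) ^ j * 2 ^ (2 * j + 2) * (2 ^ (2 * j + 2) - 1) * bernoulli (2 * j + 2) / (2 * j + 2)

/-! Put `F(X) = ∏ i, (e^{x_i X} - 1) / (x_i X) = Σ_n T_n(x) X^n / n!` and `s = Σ i, x_i`.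
Each factor satisfies `g(-X) = e^{-x_i X} g(X)`, so `F(-X) = e^{-sX} F(X)` and therefore
`F(X) - F(-X) = tanh(sX/2) (F(X) + F(-X))`. Comparing the coefficients of `X^{2n+1}` gives the
identity, and its case `n = 0` gives `T_1(x) = s/2`. The expansion of `tanh` in tangent numbers
follows from `X tanh X = B(4X) - B(2X) + X`, where `B(X) = X / (e^X - 1)` is the Bernoulli
series. -/

open PowerSeries
open scoped Nat

section ExpSubOneDivX

variable (A : Type*) [CommRing A] [Algebra ℚ A]

noncomputable def expSubOneDivX : A⟦X⟧ :=
  mk fun n => algebraMap ℚ A (1 / (n + 1)!)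

theorem X_mul_expSubOneDivX : X * expSubOneDivX A = exp A - 1 := by
  ext (_ | n)
  · simp
  · simp [expSubOneDivX, coeff_succ_X_mul, coeff_exp, Nat.factorial_succ]

theorem exp_mul_rescale_neg_one_exp : exp A * rescale (-1 : A) (exp A) = 1 := by
  simpa [rescale_one] using exp_mul_exp_eq_exp_add (A := A) 1 (-1)

theorem rescale_neg_one_expSubOneDivX :
    rescale (-1 : A) (expSubOneDivX A) = rescale (-1 : A) (exp A) * expSubOneDivX A := by
  have h := congrArg (rescale (-1 : A)) (X_mul_expSubOneDivX A)
  rw [map_mul, rescale_neg_one_X, map_sub, map_one] at h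
  apply X_mul_cancel
  linear_combination -h - rescale (-1 : A) (exp A) * X_mul_expSubOneDivX A -
    exp_mul_rescale_neg_one_exp A

variable {A}

theorem prod_rescale_exp {ι : Type*} (s : Finset ι) (a : ι → A) :
    ∏ i ∈ s, rescale (a i) (exp A) = rescale (∑ i ∈ s, a i) (exp A) := by
  induction s using Finset.cons_induction with
  | empty => simp [rescale_zero]
  | cons i s hi ih => rw [prod_cons, sum_cons, ih, exp_mul_exp_eq_exp_add]

end ExpSubOneDivX

theorem PowerSeries.coeff_prod_univ {R ι : Type*} [CommSemiring R] [Fintype ι] [DecidableEq ι]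
    (f : ι → R⟦X⟧) (n : ℕ) :
    coeff n (∏ i, f i) = ∑ a ∈ piAntidiag univ n, ∏ i, coeff (a i) (f i) := by
  rw [coeff_prod]
  refine sum_nbij' (⇑) Finsupp.equivFunOnFinite.symm ?_ ?_ ?_ ?_ ?_ <;> intro a ha
  · simpa using ha
  · simpa [Finsupp.sum_fintype] using ha
  · simp
  · simp
  · simp

noncomputable def tpolyEGF {k : ℕ} (x : Fin k → ℚ) : ℚ⟦X⟧ :=
  ∏ i, rescale (x i) (expSubOneDivX ℚ)

section tpolyEGF

variable {k : ℕ} (x : Fin k → ℚ)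

theorem coeff_tpolyEGF (n : ℕ) : coeff n (tpolyEGF x) = Tpoly n x / n ! := by
  rw [tpolyEGF, coeff_prod_univ, piAntidiag_univ_fin_eq_antidiagonalTuple, Tpoly, sum_div]
  refine sum_congr rfl fun a _ => ?_
  simp only [coeff_rescale, expSubOneDivX, coeff_mk, Algebra.algebraMap_self_apply,
    Nat.factorial_succ, Nat.cast_mul, Nat.cast_succ, prod_mul_distrib, prod_div_distrib]
  field_simp
  rw [prod_const_one, mul_one]

theorem rescale_neg_one_tpolyEGF :
    rescale (-1) (tpolyEGF x) = rescale (-∑ i, x i) (exp ℚ) * tpolyEGF x := by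
  have flip (c : ℚ) : rescale (-1) (rescale c (expSubOneDivX ℚ)) =
      rescale (-c) (exp ℚ) * rescale c (expSubOneDivX ℚ) := by
    rw [rescale_rescale, mul_comm c, ← rescale_rescale, rescale_neg_one_expSubOneDivX, map_mul,
      rescale_rescale, neg_one_mul]
  simp only [tpolyEGF, map_prod, flip, prod_mul_distrib, prod_rescale_exp, sum_neg_distrib]

end tpolyEGF

noncomputable def tanhSeries : ℚ⟦X⟧ :=
  mk fun m => if Even m then 0 else (-1) ^ (m / 2) * tangentA (m / 2) / m !

theorem coeff_tanhSeries_two_mul (j : ℕ) : coeff (2 * j) tanhSeries = 0 := by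
  simp [tanhSeries]

theorem coeff_tanhSeries_two_mul_add_one (j : ℕ) :
    coeff (2 * j + 1) tanhSeries = (-1) ^ j * tangentA j / (2 * j + 1)! := by
  simp [tanhSeries, show (2 * j + 1) / 2 = j by omega]

theorem tangentA_div_factorial (j : ℕ) :
    (-1) ^ j * tangentA j / (2 * j + 1)! =
      (4 ^ (2 * j + 2) - 2 ^ (2 * j + 2)) * bernoulli (2 * j + 2) / (2 * j + 2)! := by
  have hsign : (-1 : ℚ) ^ j * tangentA j =
      2 ^ (2 * j + 2) * (2 ^ (2 * j + 2) - 1) * bernoulli (2 * j + 2) / (2 * j + 2) := by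
    simp only [tangentA, mul_div_assoc, ← mul_assoc, ← mul_pow]
    norm_num
  have hfac : ((2 * j + 2)! : ℚ) = (2 * j + 2) * (2 * j + 1)! := by
    rw [Nat.factorial_succ (2 * j + 1)]; push_cast; ring
  rw [hsign, hfac, show (4 : ℚ) = 2 * 2 by norm_num, mul_pow]
  field_simp

theorem X_mul_tanhSeries :
    X * tanhSeries =
      rescale 4 (bernoulliPowerSeries ℚ) - rescale 2 (bernoulliPowerSeries ℚ) + X := by
  ext m
  rw [map_add, map_sub, coeff_rescale, coeff_rescale]
  rcases m with _ | _ | m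
  · simp [bernoulliPowerSeries]
  · norm_num [coeff_succ_X_mul, bernoulliPowerSeries, tanhSeries]
  · rw [coeff_succ_X_mul, coeff_X, if_neg (by omega), add_zero]
    simp only [bernoulliPowerSeries, coeff_mk, Algebra.algebraMap_self_apply]
    obtain ⟨j, rfl | rfl⟩ := Nat.even_or_odd' m
    · rw [coeff_tanhSeries_two_mul_add_one, tangentA_div_factorial]
      ring
    · rw [show 2 * j + 1 + 1 = 2 * (j + 1) by ring, coeff_tanhSeries_two_mul,
        bernoulli_eq_bernoulli'_of_ne_one (by omega),
        bernoulli'_eq_zero_of_odd ⟨j + 1, by ring⟩ (by omega)]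
      ring

theorem tanhSeries_mul_rescale_two_exp_add_one :
    tanhSeries * (rescale 2 (exp ℚ) + 1) = rescale 2 (exp ℚ) - 1 := by
  set E := rescale (2 : ℚ) (exp ℚ)
  have hB (a : ℚ) :
      rescale a (bernoulliPowerSeries ℚ) * (rescale a (exp ℚ) - 1) = C a * X := by
    simpa using congrArg (rescale a) (bernoulliPowerSeries_mul_exp_sub_one ℚ)
  have hE4 : rescale (4 : ℚ) (exp ℚ) = E * E := by
    rw [exp_mul_exp_eq_exp_add]; norm_num
  have hE : E - 1 ≠ 0 := fun h => by
    simpa [E, coeff_rescale] using congrArg (coeff 1) h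
  refine mul_left_cancel₀ (mul_ne_zero X_ne_zero hE) ?_
  have hB2 := hB 2
  have hB4 := hB 4
  rw [hE4] at hB4
  simp only [map_ofNat] at hB2 hB4
  linear_combination (E - 1) * (E + 1) * X_mul_tanhSeries + hB4 - (E + 1) * hB2

theorem rescale_tanhSeries_mul (s : ℚ) :
    rescale (s / 2) tanhSeries * (1 + rescale (-s) (exp ℚ)) = 1 - rescale (-s) (exp ℚ) := by
  have h := congrArg (rescale (s / 2)) tanhSeries_mul_rescale_two_exp_add_one
  rw [map_mul, map_add, map_sub, map_one, rescale_rescale, mul_div_cancel₀ s two_ne_zero] at h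
  have hinv : rescale (-s) (exp ℚ) * rescale s (exp ℚ) = 1 := by
    rw [exp_mul_exp_eq_exp_add, neg_add_cancel, rescale_zero]; simp
  linear_combination rescale (-s) (exp ℚ) * h + (1 - rescale (s / 2) tanhSeries) * hinv

theorem tpolyEGF_sub_rescale_neg_one {k : ℕ} (x : Fin k → ℚ) :
    tpolyEGF x - rescale (-1) (tpolyEGF x) =
      rescale ((∑ i, x i) / 2) tanhSeries * (tpolyEGF x + rescale (-1) (tpolyEGF x)) := by
  rw [rescale_neg_one_tpolyEGF]
  linear_combination -tpolyEGF x * rescale_tanhSeries_mul (∑ i, x i)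

theorem Finset.sum_range_two_mul {M : Type*} [AddCommMonoid M] (n : ℕ) (f : ℕ → M) :
    ∑ i ∈ range (2 * n), f i = ∑ j ∈ range n, (f (2 * j) + f (2 * j + 1)) := by
  induction n with
  | zero => simp
  | succ n ih =>
    rw [mul_add, mul_one, sum_range_succ, sum_range_succ, sum_range_succ, ih, add_assoc]

theorem PowerSeries.coeff_two_mul_add_one_mul {R : Type*} [CommSemiring R] {f : R⟦X⟧}
    (hf : ∀ j, coeff (2 * j) f = 0) (g : R⟦X⟧) (n : ℕ) :
    coeff (2 * n + 1) (f * g) =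
      ∑ j ∈ range (n + 1), coeff (2 * j + 1) f * coeff (2 * n - 2 * j) g := by
  rw [coeff_mul, Nat.sum_antidiagonal_eq_sum_range_succ_mk, Nat.succ_eq_add_one,
    show 2 * n + 1 + 1 = 2 * (n + 1) by ring, sum_range_two_mul]
  refine sum_congr rfl fun j _ => ?_
  rw [hf, zero_mul, zero_add, show 2 * n + 1 - (2 * j + 1) = 2 * n - 2 * j by omega]

theorem Tpoly_two_mul_add_one_div_factorial {k : ℕ} (x : Fin k → ℚ) (n : ℕ) :
    Tpoly (2 * n + 1) x / (2 * n + 1)! = ∑ j ∈ range (n + 1),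
      ((∑ i, x i) / 2) ^ (2 * j + 1) * ((-1) ^ j * tangentA j / (2 * j + 1)!) *
        (Tpoly (2 * n - 2 * j) x / (2 * n - 2 * j)!) := by
  have h := congrArg (coeff (2 * n + 1)) (tpolyEGF_sub_rescale_neg_one x)
  have heven (j : ℕ) : (-1 : ℚ) ^ (2 * n - 2 * j) = 1 := by
    rw [← Nat.mul_sub]; exact (even_two_mul _).neg_one_pow
  rw [coeff_two_mul_add_one_mul (by simp [coeff_rescale, coeff_tanhSeries_two_mul])] at h
  simp only [map_sub, map_add, coeff_rescale, coeff_tpolyEGF, coeff_tanhSeries_two_mul_add_one,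
    (odd_two_mul_add_one _).neg_one_pow, heven, one_mul, ← two_mul, mul_left_comm _ (2 : ℚ),
    ← mul_sum] at h
  linarith

theorem Tpoly_zero {k : ℕ} (x : Fin k → ℚ) : Tpoly 0 x = 1 := by
  simp [Tpoly, Nat.antidiagonalTuple_zero_right]

theorem tangentA_zero : tangentA 0 = 1 := by
  norm_num [tangentA, bernoulli_two]

theorem Tpoly_one {k : ℕ} (x : Fin k → ℚ) : Tpoly 1 x = (∑ i, x i) / 2 := by
  simpa [tangentA_zero, Tpoly_zero] using Tpoly_two_mul_add_one_div_factorial x 0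

theorem stmt5_general (n k : ℕ) (x : Fin k → ℚ) :
    Tpoly (2 * n + 1) x =
      ∑ j ∈ Finset.range (n + 1),
        (-1 : ℚ) ^ j * tangentA j * ((2 * n + 1).choose (2 * j + 1) : ℚ) *
          (Tpoly 1 x) ^ (2 * j + 1) * Tpoly (2 * n - 2 * j) x := by
  have h := Tpoly_two_mul_add_one_div_factorial x n
  rw [div_eq_iff (by positivity)] at h
  rw [h, sum_mul, Tpoly_one]
  refine sum_congr rfl fun j hj => ?_
  have hjn : j ≤ n := Nat.lt_succ_iff.mp (mem_range.mp hj)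
  rw [Nat.cast_choose ℚ (by omega : 2 * j + 1 ≤ 2 * n + 1),
    show 2 * n + 1 - (2 * j + 1) = 2 * n - 2 * j by omega]
  field_simp

theorem stmt5 (n k : ℕ) (hn : 1 ≤ n) (hk : 1 ≤ k) (x : Fin k → ℚ) :
    Tpoly (2 * n + 1) x =
      ∑ j ∈ Finset.range (n + 1),
        (-1 : ℚ) ^ j * tangentA j * ((2 * n + 1).choose (2 * j + 1) : ℚ) *
          (Tpoly 1 x) ^ (2 * j + 1) * Tpoly (2 * n - 2 * j) x :=
  stmt5_general n k x
end

section
/- Let k ≥ 1 and n ≥ k be integers, and let x_1,…,x_k be nonnegative real numbers. Then (−1)^{k+1} · Σ_{∅≠S⊆{1,…,k}} (−1)^{|S|−1} (Σ_{i∈S} x_i)^n ≥ 0. (Equivalently, the polynomial T_{n−k} determined by P_n(x) = (−1)^{k+1}(n!/(n−k)!)(Π_{i}x_i)·T_{n−k}(x) is nonnegative for nonnegative arguments.) -/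
/-!
Expanding `(∑ i ∈ S, x i) ^ n` as a sum over maps `f : Fin n → Fin k` with values in `S` and
applying inclusion–exclusion to the events "`f` misses `i`" shows that, for `n ≠ 0`,
`(-1) ^ (k + 1) * P_n(x)` is the sum of the monomials `∏ j, x (f j)` over the surjective `f`.
For nonnegative `x` every such monomial is nonnegative.
-/

open Finset

/-- `P_n(x) = Σ_{∅≠S⊆{1,…,k}} (−1)^{|S|−1} (Σ_{i∈S} x_i)^n` over the reals. -/
def PnR {k : ℕ} (n : ℕ) (x : Fin k → ℝ) : ℝ :=
  ∑ S ∈ (Finset.univ : Finset (Fin k)).powerset.erase ∅,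
    (-1 : ℝ) ^ (S.card - 1) * (∑ i ∈ S, x i) ^ n

section

variable {ι R : Type*} [Fintype ι] [DecidableEq ι] [CommRing R]

lemma neg_one_pow_card_compl (S : Finset ι) :
    (-1 : R) ^ #Sᶜ = (-1) ^ Fintype.card ι * (-1) ^ #S := by
  rw [← card_compl_add_card S, pow_add, mul_assoc, ← mul_pow, neg_one_mul, neg_neg, one_pow,
    mul_one]

lemma sum_surjective_prod_eq (x : ι → R) (n : ℕ) :
    ∑ f : Fin n → ι with Function.Surjective f, ∏ j, x (f j) =
      ∑ S : Finset ι, (-1) ^ #Sᶜ * (∑ i ∈ S, x i) ^ n := by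
  have h := inclusion_exclusion_sum_inf_compl univ
    (fun i ↦ {f : Fin n → ι | ∀ j, f j ≠ i}) (fun f ↦ ∏ j, x (f j))
  have hsurj : (univ.inf fun i ↦ ({f : Fin n → ι | ∀ j, f j ≠ i} : Finset _)ᶜ) =
      univ.filter Function.Surjective := by
    ext f; simp [mem_inf, Function.Surjective]
  have havoid (t : Finset ι) : t.inf (fun i ↦ ({f : Fin n → ι | ∀ j, f j ≠ i} : Finset _)) =
      Fintype.piFinset fun _ ↦ tᶜ := by
    ext f
    simp only [mem_inf, mem_filter, mem_univ, true_and, Fintype.mem_piFinset, mem_compl]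
    grind
  simp only [hsurj, havoid, ← sum_pow', powerset_univ, zsmul_eq_mul, Int.cast_pow, Int.cast_neg,
    Int.cast_one] at h
  rw [h]
  exact Fintype.sum_bijective compl compl_involutive.bijective _ _ (by simp)

end

lemma PnR_eq_neg_sum {k n : ℕ} (hn : n ≠ 0) (x : Fin k → ℝ) :
    PnR n x = -∑ S : Finset (Fin k), (-1) ^ #S * (∑ i ∈ S, x i) ^ n := by
  have hsign : ∀ S ∈ (univ : Finset (Fin k)).powerset.erase ∅,
      (-1 : ℝ) ^ (#S - 1) * (∑ i ∈ S, x i) ^ n = -((-1) ^ #S * (∑ i ∈ S, x i) ^ n) := by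
    intro S hS
    have hS : S.Nonempty := nonempty_iff_ne_empty.mpr (ne_of_mem_erase hS)
    obtain ⟨m, hm⟩ := Nat.exists_eq_add_one_of_ne_zero hS.card_pos.ne'
    rw [hm, pow_succ]
    simp
  rw [PnR, sum_congr rfl hsign, sum_neg_distrib, sum_erase _ (by simp [hn]), powerset_univ]

lemma neg_one_pow_succ_mul_PnR {k n : ℕ} (hn : n ≠ 0) (x : Fin k → ℝ) :
    (-1 : ℝ) ^ (k + 1) * PnR n x =
      ∑ f : Fin n → Fin k with Function.Surjective f, ∏ j, x (f j) := by
  simp_rw [PnR_eq_neg_sum hn, sum_surjective_prod_eq, neg_one_pow_card_compl, mul_assoc,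
    ← mul_sum, Fintype.card_fin, pow_succ]
  ring

theorem stmt6 (k n : ℕ) (hk : 1 ≤ k) (hn : k ≤ n) (x : Fin k → ℝ) (hx : ∀ i, 0 ≤ x i) :
    0 ≤ (-1 : ℝ) ^ (k + 1) * PnR n x := by
  rw [neg_one_pow_succ_mul_PnR (by omega) x]
  exact sum_nonneg fun f _ ↦ prod_nonneg fun j _ ↦ hx (f j)
end

section
/- Let n ≥ 0, k ≥ 1 and x = (x_1,…,x_k) ∈ ℚ^k. Then Σ_{∅≠S⊆{1,…,k}} (−1)^{|S|−1} (Σ_{i∈S} x_i)^{n+k} = (−1)^{k+1} · ((n+k)!/n!) · (Π_{j=1}^k x_j) · Σ_{a∈ℕ^k, a_1+⋯+a_k = n} (n!/(a_1!⋯a_k!)) Π_{i=1}^k x_i^{a_i}/(a_i+1). In other words, the polynomial T_n defined by the relation P_{n+k}(x) = (−1)^{k+1}((n+k)!/n!)(Π_j x_j)·T_n(x) is given explicitly by T_n(x) = Σ_{a∈ℕ^k, |a|=n} (n!/(a_1!⋯a_k!)) Π_i x_i^{a_i}/(a_i+1). -/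
open Finset

/-!
Expand each `(∑ i ∈ S, x i) ^ m` by the multinomial theorem and sum over `S` first: the
coefficient of `∏ i, x i ^ b i` becomes the multinomial coefficient of `b` times
`∏ i, (0 ^ b i - x i ^ b i)`, the two summands of each factor recording whether `i ∉ S` or `i ∈ S`.
This vanishes unless every `b i` is positive, so only `b = a + 1` with `∑ i, a i = n` survives,
and then `multinomial (a + 1) = (n + k)! / ∏ i, (a i + 1) * (a i)!`.
-/

namespace Finset

variable {ι : Type*} [DecidableEq ι]

theorem sum_powerset_neg_one_pow_card_mul_sum_pow {R : Type*} [CommRing R] (s : Finset ι)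
    (x : ι → R) (m : ℕ) :
    ∑ t ∈ s.powerset, (-1) ^ #t * (∑ i ∈ t, x i) ^ m =
      ∑ b ∈ piAntidiag s m, Nat.multinomial s b * ∏ i ∈ s, (0 ^ b i - x i ^ b i) := by
  have hsum : ∀ t ∈ s.powerset, ∑ i ∈ t, x i = ∑ i ∈ s, t.piecewise x 0 i := by
    intro t ht
    rw [sum_piecewise, inter_eq_right.2 (mem_powerset.1 ht)]
    simp
  calc _ = ∑ t ∈ s.powerset, ∑ b ∈ piAntidiag s m,
        Nat.multinomial s b * ((∏ i ∈ t, -x i ^ b i) * ∏ i ∈ s \ t, (0 : R) ^ b i) := by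
        refine sum_congr rfl fun t ht => ?_
        rw [hsum t ht, sum_pow_eq_sum_piAntidiag, mul_sum]
        refine sum_congr rfl fun b _ => ?_
        have hpow : ∀ i ∈ s, t.piecewise x 0 i ^ b i =
            t.piecewise (fun i => x i ^ b i) (fun i => 0 ^ b i) i := by
          intro i _
          by_cases hi : i ∈ t <;> simp [hi]
        rw [prod_congr rfl hpow, prod_piecewise, inter_eq_right.2 (mem_powerset.1 ht), prod_neg]
        ring
    _ = _ := by
        rw [sum_comm]
        simp_rw [← mul_sum, ← prod_add, neg_add_eq_sub]

theorem sum_piAntidiag_univ_add_card [Fintype ι] {M : Type*} [AddCommMonoid M]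
    (f : (ι → ℕ) → M) (n : ℕ) (hf : ∀ b i, b i = 0 → f b = 0) :
    ∑ b ∈ piAntidiag univ (n + Fintype.card ι), f b = ∑ a ∈ piAntidiag univ n, f (a + 1) := by
  symm
  rw [show ∑ a ∈ piAntidiag univ n, f (a + 1) =
      ∑ a ∈ piAntidiag univ n, f (addRightEmbedding 1 a) from rfl, ← sum_map]
  refine sum_subset (fun b hb => ?_) fun b hb hb' => ?_
  · obtain ⟨a, ha, rfl⟩ := mem_map.1 hb
    simp_all [sum_add_distrib]
  · by_contra hfb
    have hpos : ∀ i, 1 ≤ b i := fun i => Nat.one_le_iff_ne_zero.2 fun hi => hfb (hf b i hi)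
    refine hb' (mem_map.2 ⟨b - 1, ?_, funext fun i => Nat.sub_add_cancel (hpos i)⟩)
    have hbsum : ∑ i, b i = n + Fintype.card ι := (mem_piAntidiag.1 hb).1
    have hb1 : ∑ i, (b i - 1) + Fintype.card ι = ∑ i, b i := by
      rw [← card_univ, card_eq_sum_ones, ← sum_add_distrib]
      exact sum_congr rfl fun i _ => Nat.sub_add_cancel (hpos i)
    simp only [mem_piAntidiag, Pi.sub_apply, Pi.one_apply, mem_univ, implies_true, and_true]
    omega

end Finset

theorem Nat.cast_multinomial_add_one {ι K : Type*} [Field K] [CharZero K] (s : Finset ι)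
    (a : ι → ℕ) :
    (Nat.multinomial s (a + 1) : K) =
      (∑ i ∈ s, a i + #s).factorial / ∏ i ∈ s, ((a i + 1 : K) * (a i).factorial) := by
  rw [eq_div_iff (prod_ne_zero_iff.2 fun i _ =>
    mul_ne_zero (Nat.cast_add_one_ne_zero _) (Nat.cast_ne_zero.2 (Nat.factorial_ne_zero _))),
    mul_comm]
  have hspec := Nat.multinomial_spec s (a + 1)
  simp only [Pi.add_apply, Pi.one_apply, sum_add_distrib, sum_const, smul_eq_mul, mul_one,
    Nat.factorial_succ] at hspec
  exact_mod_cast hspec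

theorem Pn_eq_neg_sum_powerset {k m : ℕ} (hm : m ≠ 0) (x : Fin k → ℚ) :
    Pn m x = -∑ t ∈ univ.powerset, (-1) ^ #t * (∑ i ∈ t, x i) ^ m := by
  rw [Pn, ← sum_erase_add _ _ (empty_mem_powerset univ), card_empty, sum_empty, zero_pow hm,
    mul_zero, add_zero, ← sum_neg_distrib]
  refine sum_congr rfl fun t ht => ?_
  obtain ⟨i, hi⟩ := nonempty_iff_ne_empty.2 (ne_of_mem_erase ht)
  rw [← Nat.sub_add_cancel (card_pos.2 ⟨i, hi⟩), pow_succ]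
  simp

theorem stmt7 (n k : ℕ) (hk : 1 ≤ k) (x : Fin k → ℚ) :
    Pn (n + k) x =
      (-1 : ℚ) ^ (k + 1) * (((n + k).factorial : ℚ) / (n.factorial : ℚ)) * (∏ j, x j) *
        ∑ a ∈ Finset.Nat.antidiagonalTuple k n,
          ((n.factorial : ℚ) / ∏ i, ((a i).factorial : ℚ)) * ∏ i, x i ^ (a i) / (a i + 1) := by
  have hvanish : ∀ (b : Fin k → ℕ) i, b i = 0 →
      (Nat.multinomial univ b : ℚ) * ∏ i, (0 ^ b i - x i ^ b i) = 0 := fun b i hi =>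
    mul_eq_zero_of_right _ (prod_eq_zero (mem_univ i) (by simp [hi]))
  have hshift := sum_piAntidiag_univ_add_card _ n hvanish
  rw [Fintype.card_fin] at hshift
  rw [Pn_eq_neg_sum_powerset (by omega), sum_powerset_neg_one_pow_card_mul_sum_pow, hshift,
    piAntidiag_univ_fin_eq_antidiagonalTuple, mul_sum, ← sum_neg_distrib]
  refine sum_congr rfl fun a ha => ?_
  rw [Finset.Nat.mem_antidiagonalTuple] at ha
  have hsign : ∏ i, (0 ^ (a i + 1) - x i ^ (a i + 1)) = (-1) ^ k * ∏ i, x i ^ (a i + 1) := by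
    simp [prod_neg]
  simp only [Pi.add_apply, Pi.one_apply]
  rw [hsign, Nat.cast_multinomial_add_one, ha, card_univ, Fintype.card_fin]
  simp only [prod_mul_distrib, pow_succ, prod_div_distrib]
  field_simp
end

section
/- Let n ≥ 1, k ≥ 1 and x = (x_1,…,x_k) ∈ ℚ^k. If n is odd, then f_n(x) = Σ_{j=1}^n (−1)^{j+1} C(n,j) f_1(x)^j f_{n−j}(x). If n is even, then f_n(x) = Σ_{j=1}^n (−1)^{j+1} C(n,j) f_1(x)^j f_{n−j}(x) + ũ_n(x)/((n+1)·2^n), where ũ_n is as defined in the context (for n = 2t). -/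
open Finset

/-!
With `B(z) = z / (e^z - 1)` one has `f_n(x) = n! [z^n] ∏ᵢ B(-xᵢ z)` and `f_1(x) = ∑ᵢ xᵢ / 2`.
Hence `∑_{j=0}^n (-1)^j C(n,j) f_1^j f_{n-j}` is `n! [z^n]` of
`e^{-f_1 z} ∏ᵢ B(-xᵢ z) = ∏ᵢ H(-xᵢ z) =: P(z)`, where `H(z) = B(z) e^{z/2} = (z/2) / sinh (z/2)`.
The series `P` satisfies `z P' = D P` with `D` an even series without constant term, and such a
first-order equation determines `P` from its constant term, degree by degree. Comparing `P(z)`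
with `P(-z)` shows that `P` is even, which gives the odd case. In degrees `≤ 2t`, `D` agrees with
the logarithmic derivative of `∏_{j ≤ t} exp (-c_j p_{2j} z^{2j})`, `c_j = B_{2j} / (2j (2j)!)`,
whose coefficient of `z^{2t}` is a sum over the partitions of `t`: it is `ũ_{2t} / ((2t+1)! 4^t)`.
-/

open PowerSeries

namespace Nat.Partition

theorem exists_smul_toFinsuppAntidiag_eq {d t : ℕ} (hd : d ≠ 0) {g : ℕ →₀ ℕ}
    (hg : g ∈ (Icc 1 t).finsuppAntidiag (d * t)) (hdvd : ∀ j ∈ Icc 1 t, d * j ∣ g j) :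
    ∃ p : t.Partition, d • p.toFinsuppAntidiag = g := by
  rw [mem_finsuppAntidiag] at hg
  have hmul : ∀ j ∈ Icc 1 t, d * (g j / (d * j) * j) = g j := fun j hj => by
    rw [mul_left_comm]
    exact Nat.div_mul_cancel (hdvd j hj)
  set parts := ∑ j ∈ Icc 1 t, Multiset.replicate (g j / (d * j)) j
  have hcount (i : ℕ) : parts.count i = if i ∈ Icc 1 t then g i / (d * i) else 0 := by
    simp only [parts, Multiset.count_sum', Multiset.count_replicate]
    exact sum_ite_eq' _ _ _
  have hsum : parts.sum = t := by
    refine Nat.eq_of_mul_eq_mul_left (Nat.pos_of_ne_zero hd) ?_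
    simp only [parts, Multiset.sum_sum, Multiset.sum_replicate, smul_eq_mul, mul_sum]
    rw [← hg.1]
    exact sum_congr rfl hmul
  refine ⟨⟨parts, fun {i} hi => ?_, hsum⟩, ?_⟩
  · obtain ⟨j, hj, hij⟩ := Multiset.mem_sum.1 hi
    rw [Multiset.eq_of_mem_replicate hij]
    exact (mem_Icc.1 hj).1
  · ext i
    simp only [Finsupp.smul_apply, toFinsuppAntidiag, Finsupp.coe_mk, hcount, smul_eq_mul]
    split_ifs with hi
    · exact hmul i hi
    · rw [zero_mul, mul_zero, eq_comm, ← Finsupp.notMem_support_iff]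
      exact fun h => hi (hg.2 h)

end Nat.Partition

namespace PowerSeries

section EulerOperator

variable {R : Type*} [CommRing R]

theorem coeff_X_mul_derivative (f : R⟦X⟧) (n : ℕ) :
    coeff n (X * d⁄dX R f) = n * coeff n f := by
  cases n with
  | zero => simp
  | succ n => rw [coeff_succ_X_mul, coeff_derivative, mul_comm]; push_cast; ring

theorem constantCoeff_rescale (c : R) (f : R⟦X⟧) :
    constantCoeff (rescale c f) = constantCoeff f := by
  rw [← coeff_zero_eq_constantCoeff_apply, coeff_rescale, pow_zero, one_mul,
    coeff_zero_eq_constantCoeff_apply]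

theorem X_mul_derivative_rescale (c : R) (f : R⟦X⟧) :
    X * d⁄dX R (rescale c f) = rescale c (X * d⁄dX R f) := by
  ext n
  rw [coeff_X_mul_derivative, coeff_rescale, coeff_rescale, coeff_X_mul_derivative]
  ring

theorem X_mul_derivative_mul {f g D E : R⟦X⟧} (hf : X * d⁄dX R f = D * f)
    (hg : X * d⁄dX R g = E * g) : X * d⁄dX R (f * g) = (D + E) * (f * g) := by
  rw [Derivation.leibniz, smul_eq_mul, smul_eq_mul]
  linear_combination g * hf + f * hg

theorem X_mul_derivative_prod {ι : Type*} (s : Finset ι) {f D : ι → R⟦X⟧}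
    (h : ∀ i ∈ s, X * d⁄dX R (f i) = D i * f i) :
    X * d⁄dX R (∏ i ∈ s, f i) = (∑ i ∈ s, D i) * ∏ i ∈ s, f i := by
  classical
  induction s using Finset.induction_on with
  | empty => simp
  | insert a s ha ih =>
    rw [prod_insert ha, sum_insert ha]
    exact X_mul_derivative_mul (h a (mem_insert_self a s))
      (ih fun i hi => h i (mem_insert_of_mem hi))

variable [IsDomain R] [CharZero R]

theorem coeff_eq_of_X_mul_derivative_eq {P Q D E : R⟦X⟧} (hP : X * d⁄dX R P = D * P)
    (hQ : X * d⁄dX R Q = E * Q) (h0 : constantCoeff P = constantCoeff Q)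
    (hD0 : constantCoeff D = 0) {N : ℕ} (hDE : ∀ m ≤ N, coeff m D = coeff m E) :
    ∀ n ≤ N, coeff n P = coeff n Q := by
  intro n
  induction n using Nat.strong_induction_on with
  | _ n ih =>
  intro hn
  rcases n with _ | n
  · simpa using h0
  have hE0 : coeff 0 E = 0 := by rw [← hDE 0 (Nat.zero_le N)]; simpa using hD0
  refine mul_left_cancel₀ (Nat.cast_ne_zero.2 n.succ_ne_zero : ((n + 1 : ℕ) : R) ≠ 0) ?_
  rw [← coeff_X_mul_derivative, ← coeff_X_mul_derivative, hP, hQ, coeff_mul, coeff_mul]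
  refine sum_congr rfl fun ⟨a, b⟩ hab => ?_
  rw [HasAntidiagonal.mem_antidiagonal] at hab
  rcases a with _ | a
  · simp [hD0, hE0]
  · rw [hDE _ (by omega), ih b (by omega) (by omega)]

theorem rescale_neg_one_eq_self_of_X_mul_derivative_eq {P D : R⟦X⟧}
    (hP : X * d⁄dX R P = D * P) (hD : rescale (-1) D = D) (hD0 : constantCoeff D = 0) :
    rescale (-1) P = P := by
  have hQ : X * d⁄dX R (rescale (-1) P) = D * rescale (-1) P := by
    rw [X_mul_derivative_rescale, hP, map_mul, hD]
  ext n
  exact coeff_eq_of_X_mul_derivative_eq hQ hP (constantCoeff_rescale _ _) hD0 (fun _ _ => rfl) n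
    le_rfl

theorem coeff_eq_zero_of_rescale_neg_one_eq_self {P : R⟦X⟧} (hP : rescale (-1) P = P) {n : ℕ}
    (hn : Odd n) : coeff n P = 0 := by
  have h := congrArg (coeff n) hP
  rw [coeff_rescale, hn.neg_one_pow, neg_one_mul, neg_eq_iff_add_eq_zero, ← two_mul] at h
  simpa using h

end EulerOperator

section ExpMonomial

variable {K : Type*} [Field K]

/-- The series `exp (c X ^ m)`. -/
noncomputable def expMonomial (c : K) (m : ℕ) : K⟦X⟧ :=
  mk fun n => if m ∣ n then c ^ (n / m) / (n / m).factorial else 0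

theorem coeff_expMonomial (c : K) (m n : ℕ) :
    coeff n (expMonomial c m) = if m ∣ n then c ^ (n / m) / (n / m).factorial else 0 :=
  coeff_mk _ _

theorem constantCoeff_expMonomial (c : K) (m : ℕ) : constantCoeff (expMonomial c m) = 1 := by
  rw [← coeff_zero_eq_constantCoeff_apply, coeff_expMonomial]
  simp

theorem X_mul_derivative_expMonomial [CharZero K] (c : K) (m : ℕ) :
    X * d⁄dX K (expMonomial c m) = (C (m * c) * X ^ m) * expMonomial c m := by
  ext n
  rw [coeff_X_mul_derivative, mul_assoc, coeff_C_mul, coeff_X_pow_mul', coeff_expMonomial]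
  rcases Nat.eq_zero_or_pos m with rfl | hm
  · simp
  by_cases hmn : m ∣ n
  · obtain ⟨q, rfl⟩ := hmn
    rcases q with _ | q
    · simp [hm.ne']
    rw [if_pos ⟨_, rfl⟩, if_pos (Nat.le_mul_of_pos_right m q.succ_pos), coeff_expMonomial,
      show m * (q + 1) - m = m * q by rw [Nat.mul_succ, Nat.add_sub_cancel], if_pos ⟨q, rfl⟩,
      Nat.mul_div_cancel_left _ hm, Nat.mul_div_cancel_left _ hm, Nat.factorial_succ]
    push_cast
    field_simp
    ring
  · rw [if_neg hmn, mul_zero]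
    split_ifs with hle
    · have hmn' : ¬m ∣ n - m := fun h => hmn (by simpa [hle] using Nat.dvd_add h (dvd_refl m))
      rw [coeff_expMonomial, if_neg hmn', mul_zero]
    · rw [mul_zero]

theorem coeff_prod_expMonomial (a : ℕ → K) {d : ℕ} (hd : d ≠ 0) (t : ℕ) :
    coeff (d * t) (∏ j ∈ Icc 1 t, expMonomial (a j) (d * j)) =
      ∑ p : t.Partition, ∏ j ∈ Icc 1 t,
        a j ^ p.parts.count j / (p.parts.count j).factorial := by
  rw [coeff_prod]
  refine (sum_of_injOn (fun p => d • p.toFinsuppAntidiag) ?_ ?_ ?_ ?_).symm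
  · intro p _ q _ hpq
    exact Nat.Partition.toFinsuppAntidiag_injective t (smul_right_injective _ hd hpq)
  · intro p _
    have hp := mem_finsuppAntidiag.1 p.toFinsuppAntidiag_mem_finsuppAntidiag
    rw [mem_coe, mem_finsuppAntidiag]
    refine ⟨?_, Finsupp.support_smul.trans hp.2⟩
    simp [← mul_sum, hp.1]
  · intro g hg hne
    by_contra hprod
    have hdvd : ∀ j ∈ Icc 1 t, d * j ∣ g j := fun j hj => by
      by_contra h
      exact hprod (prod_eq_zero hj (by rw [coeff_expMonomial, if_neg h]))
    obtain ⟨p, rfl⟩ := Nat.Partition.exists_smul_toFinsuppAntidiag_eq hd hg hdvd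
    exact hne ⟨p, mem_coe.2 (mem_univ p), rfl⟩
  · intro p _
    refine prod_congr rfl fun j hj => ?_
    have hdj : 0 < d * j := Nat.mul_pos (Nat.pos_of_ne_zero hd) (mem_Icc.1 hj).1
    have h : d * (p.parts.count j * j) = d * j * p.parts.count j := by ring
    simp only [Finsupp.smul_apply, Nat.Partition.toFinsuppAntidiag, Finsupp.coe_mk, smul_eq_mul,
      coeff_expMonomial, h, dvd_mul_right, if_true, Nat.mul_div_cancel_left _ hdj]

end ExpMonomial

theorem coeff_one_prod {R ι : Type*} [CommRing R] (s : Finset ι) {f : ι → R⟦X⟧}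
    (h : ∀ i ∈ s, constantCoeff (f i) = 1) :
    coeff 1 (∏ i ∈ s, f i) = ∑ i ∈ s, coeff 1 (f i) := by
  classical
  induction s using Finset.induction_on with
  | empty => simp
  | insert a s ha ih =>
    have hs : constantCoeff (∏ i ∈ s, f i) = 1 := by
      rw [map_prod]
      exact prod_eq_one fun i hi => h i (mem_insert_of_mem hi)
    rw [prod_insert ha, sum_insert ha, ← ih fun i hi => h i (mem_insert_of_mem hi), coeff_mul,
      Nat.sum_antidiagonal_succ, Nat.antidiagonal_zero, sum_singleton]
    simp [hs, h a (mem_insert_self a s), add_comm]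

theorem rescale_sum_exp {A ι : Type*} [CommRing A] [Algebra ℚ A] (s : Finset ι) (c : ι → A) :
    rescale (∑ i ∈ s, c i) (exp A) = ∏ i ∈ s, rescale (c i) (exp A) := by
  classical
  induction s using Finset.induction_on with
  | empty => simp
  | insert a s ha ih => rw [sum_insert ha, prod_insert ha, ← ih, exp_mul_exp_eq_exp_add]

end PowerSeries

theorem X_mul_derivative_rescale_exp (c : ℚ) :
    X * d⁄dX ℚ (rescale c (exp ℚ)) = (C c * X) * rescale c (exp ℚ) := by
  rw [X_mul_derivative_rescale, derivative_exp ℚ, map_mul, rescale_X]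

theorem X_mul_derivative_bernoulliPowerSeries :
    X * d⁄dX ℚ (bernoulliPowerSeries ℚ) =
      (1 - X - bernoulliPowerSeries ℚ) * bernoulliPowerSeries ℚ := by
  set B := bernoulliPowerSeries ℚ
  have hB : B * (exp ℚ - 1) = X := bernoulliPowerSeries_mul_exp_sub_one ℚ
  have hB' : d⁄dX ℚ B * (exp ℚ - 1) + B * exp ℚ = 1 := by
    have h := congrArg (d⁄dX ℚ) hB
    rw [Derivation.leibniz, map_sub, derivative_exp ℚ, derivative_one, sub_zero, derivative_X,
      smul_eq_mul, smul_eq_mul] at h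
    linear_combination h
  linear_combination B * hB' - (d⁄dX ℚ B + B) * hB

/-- `(X/2) / sinh (X/2)`. -/
noncomputable def symBernoulliSeries : ℚ⟦X⟧ := bernoulliPowerSeries ℚ * rescale 2⁻¹ (exp ℚ)

noncomputable def symBernoulliLogDeriv : ℚ⟦X⟧ := 1 - X - bernoulliPowerSeries ℚ + C 2⁻¹ * X

theorem X_mul_derivative_symBernoulliSeries :
    X * d⁄dX ℚ symBernoulliSeries = symBernoulliLogDeriv * symBernoulliSeries :=
  X_mul_derivative_mul X_mul_derivative_bernoulliPowerSeries (X_mul_derivative_rescale_exp _)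

theorem constantCoeff_symBernoulliSeries : constantCoeff symBernoulliSeries = 1 := by
  rw [symBernoulliSeries, map_mul, constantCoeff_rescale, constantCoeff_exp, mul_one,
    ← coeff_zero_eq_constantCoeff_apply]
  simp [bernoulliPowerSeries]

theorem coeff_symBernoulliLogDeriv (m : ℕ) :
    coeff m symBernoulliLogDeriv = if 2 ≤ m then -(bernoulli m / m.factorial) else 0 := by
  rw [symBernoulliLogDeriv, map_add, map_sub, map_sub, coeff_C_mul, coeff_X, coeff_one,
    bernoulliPowerSeries, coeff_mk]
  match m with
  | 0 => simp
  | 1 => norm_num [bernoulli_one]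
  | m + 2 => simp

theorem constantCoeff_symBernoulliLogDeriv : constantCoeff symBernoulliLogDeriv = 0 := by
  rw [← coeff_zero_eq_constantCoeff_apply, coeff_symBernoulliLogDeriv, if_neg (by omega)]

theorem coeff_symBernoulliLogDeriv_of_odd {m : ℕ} (hm : Odd m) :
    coeff m symBernoulliLogDeriv = 0 := by
  rw [coeff_symBernoulliLogDeriv]
  split_ifs with h
  · rw [bernoulli_eq_zero_of_odd hm h, zero_div, neg_zero]
  · rfl

theorem rescale_neg_one_symBernoulliLogDeriv :
    rescale (-1) symBernoulliLogDeriv = symBernoulliLogDeriv := by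
  ext m
  rw [coeff_rescale]
  rcases Nat.even_or_odd m with hm | hm
  · rw [hm.neg_one_pow, one_mul]
  · rw [coeff_symBernoulliLogDeriv_of_odd hm, mul_zero]

theorem fpoly_eq_coeff_prod {k : ℕ} (n : ℕ) (x : Fin k → ℚ) :
    fpoly n x = n.factorial * coeff n (∏ i, rescale (-x i) (bernoulliPowerSeries ℚ)) := by
  rw [coeff_prod, fpoly, mul_sum]
  refine sum_nbij' Finsupp.equivFunOnFinite.symm (⇑) (fun a ha => ?_) (fun l hl => ?_)
    (fun _ _ => rfl) (fun l _ => Finsupp.equivFunOnFinite_symm_coe l) (fun a _ => ?_)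
  · simpa [Nat.mem_antidiagonalTuple] using ha
  · simpa [Nat.mem_antidiagonalTuple] using hl
  · simp only [Finsupp.coe_equivFunOnFinite_symm, coeff_rescale, bernoulliPowerSeries, coeff_mk,
      Algebra.algebraMap_self, RingHom.id_apply]
    rw [div_mul_eq_mul_div, mul_div_assoc, ← prod_div_distrib]
    congr 1
    refine prod_congr rfl fun i _ => ?_
    rw [neg_pow]
    ring

theorem fpoly_one {k : ℕ} (x : Fin k → ℚ) : fpoly 1 x = ∑ i, x i / 2 := by
  rw [fpoly_eq_coeff_prod, coeff_one_prod]
  · simp [coeff_rescale, bernoulliPowerSeries, bernoulli_one, div_eq_mul_inv]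
  · intro i _
    rw [constantCoeff_rescale, ← coeff_zero_eq_constantCoeff_apply]
    simp [bernoulliPowerSeries]

noncomputable def symBernoulliProd {k : ℕ} (x : Fin k → ℚ) : ℚ⟦X⟧ :=
  ∏ i, rescale (-x i) symBernoulliSeries

theorem rescale_exp_mul_prod_rescale_bernoulli {k : ℕ} (x : Fin k → ℚ) :
    rescale (-fpoly 1 x) (exp ℚ) * ∏ i, rescale (-x i) (bernoulliPowerSeries ℚ) =
      symBernoulliProd x := by
  rw [fpoly_one, ← sum_neg_distrib, rescale_sum_exp, ← prod_mul_distrib, symBernoulliProd]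
  refine prod_congr rfl fun i _ => ?_
  rw [symBernoulliSeries, map_mul, rescale_rescale, mul_comm]
  ring_nf

theorem sum_range_choose_mul_fpoly {k : ℕ} (n : ℕ) (x : Fin k → ℚ) :
    ∑ j ∈ range (n + 1), (-1) ^ j * (n.choose j : ℚ) * fpoly 1 x ^ j * fpoly (n - j) x =
      n.factorial * coeff n (symBernoulliProd x) := by
  rw [← rescale_exp_mul_prod_rescale_bernoulli, coeff_mul, mul_sum,
    Nat.sum_antidiagonal_eq_sum_range_succ_mk]
  refine sum_congr rfl fun j hj => ?_
  have hjn : j ≤ n := Nat.lt_succ_iff.1 (mem_range.1 hj)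
  rw [coeff_rescale, coeff_exp, fpoly_eq_coeff_prod (n - j), Nat.cast_choose ℚ hjn,
    neg_pow (fpoly 1 x)]
  simp only [Algebra.algebraMap_self, RingHom.id_apply]
  field_simp

theorem sum_Icc_choose_mul_fpoly {k : ℕ} (n : ℕ) (x : Fin k → ℚ) :
    ∑ j ∈ Icc 1 n, (-1) ^ (j + 1) * (n.choose j : ℚ) * fpoly 1 x ^ j * fpoly (n - j) x =
      fpoly n x - n.factorial * coeff n (symBernoulliProd x) := by
  rw [← sum_range_choose_mul_fpoly, range_eq_Ico, sum_eq_sum_Ico_succ_bot n.succ_pos, zero_add,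
    Nat.succ_eq_add_one, Ico_add_one_right_eq_Icc]
  simp [pow_succ, sum_neg_distrib]

theorem X_mul_derivative_symBernoulliProd {k : ℕ} (x : Fin k → ℚ) :
    X * d⁄dX ℚ (symBernoulliProd x) =
      (∑ i, rescale (-x i) symBernoulliLogDeriv) * symBernoulliProd x :=
  X_mul_derivative_prod _ fun i _ => by
    rw [X_mul_derivative_rescale, X_mul_derivative_symBernoulliSeries, map_mul]

theorem constantCoeff_symBernoulliProd {k : ℕ} (x : Fin k → ℚ) :
    constantCoeff (symBernoulliProd x) = 1 := by
  simp [symBernoulliProd, constantCoeff_rescale, constantCoeff_symBernoulliSeries]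

theorem constantCoeff_sum_rescale_symBernoulliLogDeriv {k : ℕ} (x : Fin k → ℚ) :
    constantCoeff (∑ i, rescale (-x i) symBernoulliLogDeriv) = 0 := by
  simp [constantCoeff_rescale, constantCoeff_symBernoulliLogDeriv]

theorem coeff_symBernoulliProd_of_odd {k : ℕ} (x : Fin k → ℚ) {n : ℕ} (hn : Odd n) :
    coeff n (symBernoulliProd x) = 0 := by
  refine coeff_eq_zero_of_rescale_neg_one_eq_self (rescale_neg_one_eq_self_of_X_mul_derivative_eq
    (X_mul_derivative_symBernoulliProd x) ?_ (constantCoeff_sum_rescale_symBernoulliLogDeriv x)) hn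
  simp only [map_sum, rescale_rescale]
  refine sum_congr rfl fun i _ => ?_
  rw [mul_comm, ← rescale_rescale, rescale_neg_one_symBernoulliLogDeriv]

theorem coeff_sum_rescale_symBernoulliLogDeriv {k : ℕ} (x : Fin k → ℚ) (m : ℕ) :
    coeff m (∑ i, rescale (-x i) symBernoulliLogDeriv) =
      psum m x * coeff m symBernoulliLogDeriv := by
  rcases Nat.even_or_odd m with hm | hm
  · simp [coeff_rescale, psum, sum_mul, hm.neg_pow]
  · simp [coeff_rescale, coeff_symBernoulliLogDeriv_of_odd hm]

/-- `log ((X/2) / sinh (X/2)) = -∑ j, sinhLogCoeff j * X ^ (2 * j)`. -/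
noncomputable def sinhLogCoeff (j : ℕ) : ℚ := bernoulli (2 * j) / (2 * j * (2 * j).factorial)

theorem coeff_sum_rescale_symBernoulliLogDeriv_of_le {k : ℕ} (x : Fin k → ℚ) {t m : ℕ}
    (hm : m ≤ 2 * t) :
    coeff m (∑ i, rescale (-x i) symBernoulliLogDeriv) =
      coeff m (∑ j ∈ Icc 1 t,
        C (((2 * j : ℕ) : ℚ) * (-sinhLogCoeff j * psum (2 * j) x)) * X ^ (2 * j)) := by
  rw [coeff_sum_rescale_symBernoulliLogDeriv, map_sum]
  simp only [coeff_C_mul_X_pow]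
  obtain ⟨j, rfl | rfl⟩ := Nat.even_or_odd' m
  · simp only [Nat.mul_left_cancel_iff two_pos, sum_ite_eq, mem_Icc]
    rcases Nat.eq_zero_or_pos j with rfl | hj
    · simp [coeff_symBernoulliLogDeriv]
    rw [if_pos ⟨hj, by omega⟩, coeff_symBernoulliLogDeriv, if_pos (by omega), sinhLogCoeff]
    push_cast
    field_simp
  · rw [coeff_symBernoulliLogDeriv_of_odd (odd_two_mul_add_one j), mul_zero, eq_comm]
    exact sum_eq_zero fun i _ => if_neg (by omega)

theorem coeff_symBernoulliProd_two_mul {k : ℕ} (x : Fin k → ℚ) (t : ℕ) :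
    coeff (2 * t) (symBernoulliProd x) =
      ∑ μ : t.Partition, ∏ j ∈ Icc 1 t,
        (-sinhLogCoeff j * psum (2 * j) x) ^ μ.parts.count j / (μ.parts.count j).factorial := by
  rw [← coeff_prod_expMonomial _ two_ne_zero t]
  refine coeff_eq_of_X_mul_derivative_eq (X_mul_derivative_symBernoulliProd x)
    (X_mul_derivative_prod _ fun j _ => X_mul_derivative_expMonomial _ (2 * j)) ?_
    (constantCoeff_sum_rescale_symBernoulliLogDeriv x)
    (fun m hm => coeff_sum_rescale_symBernoulliLogDeriv_of_le x hm) _ le_rfl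
  simp [constantCoeff_symBernoulliProd, constantCoeff_expMonomial]

theorem ut2_eq {k : ℕ} (t : ℕ) (x : Fin k → ℚ) :
    ut2 t x = (2 * t + 1).factorial * 4 ^ t *
      ∑ μ : t.Partition, ∏ j ∈ Icc 1 t,
        (-sinhLogCoeff j * psum (2 * j) x) ^ μ.parts.count j / (μ.parts.count j).factorial := by
  rw [ut2, mul_sum]
  refine sum_congr rfl fun μ _ => ?_
  rw [phiU, mul_assoc, ← prod_mul_distrib]
  congr 1
  refine prod_congr rfl fun j _ => ?_
  rw [sinhLogCoeff, neg_mul, ← mul_neg, mul_pow]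
  ring

theorem stmt10_general (n k : ℕ) (x : Fin k → ℚ) :
    (Odd n →
      fpoly n x =
        ∑ j ∈ Finset.Icc 1 n,
          (-1 : ℚ) ^ (j + 1) * (n.choose j : ℚ) * (fpoly 1 x) ^ j * fpoly (n - j) x) ∧
    (∀ t : ℕ, n = 2 * t →
      fpoly n x =
        (∑ j ∈ Finset.Icc 1 n,
          (-1 : ℚ) ^ (j + 1) * (n.choose j : ℚ) * (fpoly 1 x) ^ j * fpoly (n - j) x) +
        ut2 t x / ((n + 1) * 2 ^ n)) := by
  refine ⟨fun hn => ?_, fun t ht => ?_⟩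
  · rw [sum_Icc_choose_mul_fpoly, coeff_symBernoulliProd_of_odd x hn, mul_zero, sub_zero]
  · subst ht
    rw [sum_Icc_choose_mul_fpoly, coeff_symBernoulliProd_two_mul, ut2_eq, Nat.factorial_succ,
      pow_mul]
    push_cast
    field_simp
    ring

theorem stmt10 (n k : ℕ) (hn : 1 ≤ n) (hk : 1 ≤ k) (x : Fin k → ℚ) :
    (Odd n →
      fpoly n x =
        ∑ j ∈ Finset.Icc 1 n,
          (-1 : ℚ) ^ (j + 1) * (n.choose j : ℚ) * (fpoly 1 x) ^ j * fpoly (n - j) x) ∧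
    (∀ t : ℕ, n = 2 * t →
      fpoly n x =
        (∑ j ∈ Finset.Icc 1 n,
          (-1 : ℚ) ^ (j + 1) * (n.choose j : ℚ) * (fpoly 1 x) ^ j * fpoly (n - j) x) +
        ut2 t x / ((n + 1) * 2 ^ n)) :=
  stmt10_general n k x
end

section
/- In the formal power series ring ℚ[[t]], one has sinhc(t) := Σ_{m≥0} t^{2m}/(2m+1)! = exp(Σ_{n≥1} (4^n B_{2n}/((2n)·(2n)!)) t^{2n}). Equivalently, (sinhc(t))^{−1} = exp(−Σ_{n≥1} (4^n B_{2n}/((2n)·(2n)!)) t^{2n}). -/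
open PowerSeries Finset

/-- `exp(h) = Σ_{n≥0} h^n/n!` for a power series `h` (with zero constant term, so that
the coefficient of `z^m` only involves `h^n` for `n ≤ m`). -/
noncomputable def expPS (h : PowerSeries ℚ) : PowerSeries ℚ :=
  PowerSeries.mk fun m =>
    ∑ n ∈ Finset.range (m + 1), (PowerSeries.coeff m (h ^ n)) / n.factorial

/-- `sinhc(t) = Σ_{m≥0} t^{2m}/(2m+1)!`. -/
noncomputable def sinhc : PowerSeries ℚ :=
  PowerSeries.mk fun m => if Even m then (1 : ℚ) / (m + 1).factorial else 0

/-- `Σ_{n≥1} (4^n B_{2n}/((2n)(2n)!)) t^{2n}`. -/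
noncomputable def sinhcLog : PowerSeries ℚ :=
  PowerSeries.mk fun m =>
    if m ≠ 0 ∧ Even m then (4 : ℚ) ^ (m / 2) * bernoulli m / (m * m.factorial) else 0

/-!
Both sides are the unique power series with constant term `1` solving `f' = sinhcLog' · f`.
For `expPS h` this is the chain rule, since `expPS h` is `exp` composed with `h`. For `sinhc`
it is the expansion `t coth t = Σ_{n≥0} 4ⁿ B_{2n} t^{2n} / (2n)! = B(2t) + t`, where `B` is the
generating function of the Bernoulli numbers: with `sinh t = t · sinhc t` one has
`(log sinhc)' = coth t - 1/t`, and `B(2t) (e^{2t} - 1) = 2t` turns this into a polynomial identity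
in `eᵗ`, `e⁻ᵗ`, `t`, `sinhc`.
-/

theorem PowerSeries.derivative_rescale {R : Type*} [CommSemiring R] (a : R) (f : R⟦X⟧) :
    d⁄dX R (rescale a f) = C a * rescale a (d⁄dX R f) := by
  ext n
  simp only [coeff_derivative, coeff_rescale, coeff_C_mul, pow_succ]
  ring

theorem PowerSeries.coeff_pow_eq_zero_of_lt {R : Type*} [CommSemiring R] {h : R⟦X⟧}
    (hh : constantCoeff h = 0) {m n : ℕ} (hmn : m < n) : coeff m (h ^ n) = 0 :=
  X_pow_dvd_iff.mp (pow_dvd_pow_of_dvd (X_dvd_iff.mpr hh) n) m hmn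

section expPS

variable {h : ℚ⟦X⟧}

theorem expPS_eq_subst_exp (hh : constantCoeff h = 0) : expPS h = (exp ℚ).subst h := by
  ext m
  rw [expPS, coeff_mk, coeff_subst' (HasSubst.of_constantCoeff_zero' hh),
    finsum_eq_sum_of_support_subset (s := range (m + 1))]
  · refine sum_congr rfl fun n _ => ?_
    simp [coeff_exp, div_eq_inv_mul]
  · intro n hn
    rw [coe_range, Set.mem_Iio, Nat.lt_succ_iff]
    contrapose! hn
    simp [coeff_pow_eq_zero_of_lt hh hn]

theorem constantCoeff_expPS (h : ℚ⟦X⟧) : constantCoeff (expPS h) = 1 := by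
  rw [← coeff_zero_eq_constantCoeff_apply, expPS, coeff_mk]
  simp

theorem derivative_expPS (hh : constantCoeff h = 0) :
    d⁄dX ℚ (expPS h) = d⁄dX ℚ h * expPS h := by
  rw [expPS_eq_subst_exp hh, derivative_subst (HasSubst.of_constantCoeff_zero' hh),
    derivative_exp, mul_comm]

theorem mul_expPS_neg_of_derivative_eq (hh : constantCoeff h = 0) {f : ℚ⟦X⟧}
    (hf : d⁄dX ℚ f = d⁄dX ℚ h * f) : f * expPS (-h) = C (constantCoeff f) := by
  refine derivative.ext ?_ ?_
  · rw [Derivation.leibniz, derivative_expPS (by simp [hh]), hf, derivative_C, smul_eq_mul,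
      smul_eq_mul, map_neg]
    ring
  · simp [constantCoeff_expPS]

theorem expPS_mul_expPS_neg (hh : constantCoeff h = 0) : expPS h * expPS (-h) = 1 := by
  rw [mul_expPS_neg_of_derivative_eq hh (derivative_expPS hh), constantCoeff_expPS, map_one]

theorem eq_expPS_of_derivative_eq (hh : constantCoeff h = 0) {f : ℚ⟦X⟧}
    (hf : d⁄dX ℚ f = d⁄dX ℚ h * f) (hf0 : constantCoeff f = 1) : f = expPS h :=
  calc f = f * expPS (-h) * expPS (-(-h)) := by
        rw [mul_assoc, expPS_mul_expPS_neg (by simp [hh]), mul_one]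
    _ = expPS h := by rw [mul_expPS_neg_of_derivative_eq hh hf, hf0, map_one, one_mul, neg_neg]

end expPS

theorem constantCoeff_sinhc : constantCoeff sinhc = 1 := by
  rw [← coeff_zero_eq_constantCoeff_apply, sinhc, coeff_mk]
  simp

theorem constantCoeff_sinhcLog : constantCoeff sinhcLog = 0 := by
  rw [← coeff_zero_eq_constantCoeff_apply, sinhcLog, coeff_mk]
  simp

theorem exp_sub_evalNegHom_exp : exp ℚ - evalNegHom (exp ℚ) = 2 * (X * sinhc) := by
  ext m
  rw [map_sub, evalNegHom, coeff_rescale, show (2 : ℚ⟦X⟧) = C 2 from rfl, coeff_C_mul]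
  simp only [coeff_exp, Algebra.algebraMap_self, RingHom.id_apply]
  rcases m with _ | m
  · simp
  · rw [coeff_succ_X_mul, sinhc, coeff_mk]
    rcases Nat.even_or_odd m with hm | hm
    · rw [if_pos hm, hm.add_one.neg_one_pow]
      ring
    · rw [if_neg (Nat.not_even_iff_odd.mpr hm), hm.add_one.neg_one_pow]
      ring

theorem X_mul_derivative_sinhcLog :
    X * d⁄dX ℚ sinhcLog = rescale 2 (bernoulliPowerSeries ℚ) + X - 1 := by
  ext m
  simp only [map_sub, map_add, coeff_rescale, bernoulliPowerSeries, coeff_mk,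
    Algebra.algebraMap_self, RingHom.id_apply, coeff_X, coeff_one]
  rcases m with _ | _ | m
  · simp
  · simp [coeff_derivative, sinhcLog, bernoulli_one]
    norm_num
  · rw [coeff_succ_X_mul, coeff_derivative, sinhcLog, coeff_mk]
    rcases Nat.even_or_odd (m + 2) with hm | hm
    · have h4 : (4 : ℚ) ^ ((m + 2) / 2) = 2 ^ (m + 2) := by
        obtain ⟨k, hk⟩ := hm
        rw [hk, ← two_mul, Nat.mul_div_cancel_left _ two_pos, pow_mul]
        norm_num
      rw [if_pos ⟨by omega, hm⟩, h4]
      simp only [Nat.add_eq_right, add_eq_zero, one_ne_zero, and_false, if_false, add_zero,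
        sub_zero]
      push_cast
      field_simp
    · rw [if_neg (fun h => (Nat.not_even_iff_odd.mpr hm) h.2),
        bernoulli_eq_zero_of_odd hm (by omega)]
      simp

theorem rescale_two_bernoulliPowerSeries_mul :
    rescale 2 (bernoulliPowerSeries ℚ) * (exp ℚ * exp ℚ - 1) = 2 * X := by
  have h := congrArg (rescale (2 : ℚ)) (bernoulliPowerSeries_mul_exp_sub_one ℚ)
  rwa [map_mul, map_sub, map_one, rescale_X, map_ofNat, ← Nat.cast_ofNat,
    ← exp_pow_eq_rescale_exp, sq] at h

theorem two_mul_derivative_X_mul_sinhc :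
    2 * d⁄dX ℚ (X * sinhc) = exp ℚ + evalNegHom (exp ℚ) := by
  rw [two_mul, ← map_add, ← two_mul, ← exp_sub_evalNegHom_exp, map_sub, evalNegHom,
    derivative_rescale, derivative_exp, map_neg, map_one, neg_one_mul, sub_neg_eq_add]

theorem derivative_sinhc : d⁄dX ℚ sinhc = d⁄dX ℚ sinhcLog * sinhc := by
  have hleib : d⁄dX ℚ (X * sinhc) = sinhc + X * d⁄dX ℚ sinhc := by
    rw [Derivation.leibniz, derivative_X, smul_eq_mul, smul_eq_mul]
    ring
  -- by `hleib` and the `sinh`, `cosh`, `t coth t` identities, `2 t² (sinhc' - L' sinhc)` equals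
  -- `2t e⁻ᵗ - B(2t) (eᵗ - e⁻ᵗ) = e⁻ᵗ (2t - B(2t) (e²ᵗ - 1)) = 0`
  have key : 2 * X ^ 2 * (d⁄dX ℚ sinhc - d⁄dX ℚ sinhcLog * sinhc) = 0 := by
    linear_combination (-2 * X) * hleib - (2 * X * sinhc) * X_mul_derivative_sinhcLog
      + X * two_mul_derivative_X_mul_sinhc
      + (rescale 2 (bernoulliPowerSeries ℚ) + X) * exp_sub_evalNegHom_exp
      - evalNegHom (exp ℚ) * rescale_two_bernoulliPowerSeries_mul
      + rescale 2 (bernoulliPowerSeries ℚ) * exp ℚ * exp_mul_exp_neg_eq_one (A := ℚ)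
  have hne : (2 * X ^ 2 : ℚ⟦X⟧) ≠ 0 := by
    simp [show (2 : ℚ⟦X⟧) = C 2 from rfl, X_ne_zero]
  exact sub_eq_zero.mp ((mul_eq_zero.mp key).resolve_left hne)

theorem stmt15 : sinhc = expPS sinhcLog ∧ sinhc⁻¹ = expPS (-sinhcLog) := by
  have hexp : sinhc = expPS sinhcLog :=
    eq_expPS_of_derivative_eq constantCoeff_sinhcLog derivative_sinhc constantCoeff_sinhc
  refine ⟨hexp, ?_⟩
  rw [PowerSeries.inv_eq_iff_mul_eq_one (by simp [constantCoeff_sinhc]), hexp, mul_comm,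
    expPS_mul_expPS_neg constantCoeff_sinhcLog]
end
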